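/- arXiv:2505.19491 — 4 statements merged into one kernel-verified Lean document; each statement's English description precedes it below -/
import Mathlib

section
/- Let λ ∈ (0,1) and run OGD with step size η = D·√(2(1−λ))/G. Then for every w ∈ W, the λ-discounted regret satisfies ∑_{t=1}^T λ^{T−t}·f_t(w_t) − ∑_{t=1}^T λ^{T−t}·f_t(w) ≤ D·G·√2/√(1−λ). -/
/-!
Each OGD step is the classical one-step estimate: convexity bounds `f t (w t) - f t u` by
`⟪∇f t (w t), w t - u⟫`, and since the projection onto `W` does not increase distances to points
of `W`, expanding `‖w t - η ∇f t (w t) - u‖²` gives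
`f t (w t) - f t u ≤ (‖w t - u‖² - ‖w (t+1) - u‖²) / (2η) + η G² / 2`.
Weighting by `λ^(T-t)` and summing, the distance terms telescope up to the nonnegative corrections
`(λ^(T-t) - λ^(T-t+1)) ‖w t - u‖²`, so they contribute at most `D² / (2η)`, while the weights sum
to at most `1 / (1 - λ)`. The chosen `η` then makes `D² / (2η) + η G² / (2(1 - λ))` equal to
`3/4 · D G √2 / √(1 - λ)`.
-/

open RealInnerProductSpace Finset

theorem sum_Icc_pow_mul_sub_succ_le {lam B : ℝ} (hlam0 : 0 ≤ lam) (hlam1 : lam ≤ 1)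
    {a : ℕ → ℝ} (T : ℕ) (ha : ∀ t ∈ Icc 1 (T + 1), a t ≤ B) :
    ∑ t ∈ Icc 1 T, lam ^ (T - t) * (a t - a (t + 1)) ≤ B - a (T + 1) := by
  induction T with
  | zero => simpa using ha 1 (by simp)
  | succ T ih =>
    have hfactor : ∑ t ∈ Icc 1 T, lam ^ (T + 1 - t) * (a t - a (t + 1))
        = lam * ∑ t ∈ Icc 1 T, lam ^ (T - t) * (a t - a (t + 1)) := by
      rw [mul_sum]
      refine sum_congr rfl fun t ht => ?_
      rw [show T + 1 - t = T - t + 1 by have := (mem_Icc.1 ht).2; omega, pow_succ]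
      ring
    have hprev := ih fun t ht => ha t (by simp only [mem_Icc] at ht ⊢; omega)
    have hlast := ha (T + 1) (by simp)
    rw [sum_Icc_succ_top (by omega), hfactor, Nat.sub_self, pow_zero, one_mul]
    nlinarith

theorem sum_Icc_pow_sub_le_inv_one_sub {lam : ℝ} (hlam0 : 0 ≤ lam) (hlam1 : lam < 1) (T : ℕ) :
    ∑ t ∈ Icc 1 T, lam ^ (T - t) ≤ (1 - lam)⁻¹ := by
  have hreflect : ∑ t ∈ Icc 1 T, lam ^ (T - t) = ∑ i ∈ range T, lam ^ i := by
    rw [← Ico_add_one_right_eq_Icc, sum_Ico_eq_sum_range, ← sum_range_reflect]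
    refine sum_congr rfl fun i hi => ?_
    congr 1; have := mem_range.1 hi; omega
  rw [hreflect]
  simpa using geom_sum_Ico_le_of_lt_one (m := 0) (n := T) hlam0 hlam1

section InnerProductSpace

variable {E : Type*} [NormedAddCommGroup E] [InnerProductSpace ℝ E]

theorem norm_sub_le_norm_sub_of_isMinOn {K : Set E} (hK : Convex ℝ K) {p v u : E}
    (hv : v ∈ K) (hu : u ∈ K) (hmin : IsMinOn (fun z => ‖z - p‖) K v) :
    ‖v - u‖ ≤ ‖p - u‖ := by
  have hinf : ‖p - v‖ = ⨅ z : K, ‖p - z‖ := by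
    simp_rw [norm_sub_rev p]
    exact (hmin.iInf_eq hv).symm
  have hobtuse : ⟪p - v, u - v⟫ ≤ 0 := (norm_eq_iInf_iff_real_inner_le_zero hK hv).1 hinf u hu
  have hexpand : ‖p - u‖ ^ 2 = ‖p - v‖ ^ 2 - 2 * ⟪p - v, u - v⟫ + ‖v - u‖ ^ 2 := by
    rw [show p - u = (p - v) - (u - v) by abel, norm_sub_sq_real, norm_sub_rev u v]
  nlinarith [norm_nonneg (p - u), norm_nonneg (v - u), sq_nonneg ‖p - v‖]

variable [CompleteSpace E]

theorem ConvexOn.inner_gradient_le_sub {s : Set E} {f : E → ℝ}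
    (hf : ConvexOn ℝ s f) {x y : E} (hx : x ∈ s) (hy : y ∈ s) (hfx : DifferentiableAt ℝ f x) :
    ⟪gradient f x, y - x⟫ ≤ f y - f x := by
  have hline := hf.comp_affineMap (AffineMap.lineMap (k := ℝ) x y)
  have hderiv : HasDerivAt (f ∘ AffineMap.lineMap (k := ℝ) x y) ⟪gradient f x, y - x⟫ 0 := by
    simpa [InnerProductSpace.toDual_apply_apply] using
      hfx.hasGradientAt.hasFDerivAt.comp_hasDerivAt_of_eq (0 : ℝ) AffineMap.hasDerivAt_lineMap
        (by simp)
  simpa [slope] using hline.le_slope_of_hasDerivAt (x := 0) (y := 1)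
    (by simpa using hx) (by simpa using hy) one_pos hderiv

theorem ConvexOn.sub_le_of_projected_gradient_step {K s : Set E} (hK : Convex ℝ K) {f : E → ℝ}
    (hf : ConvexOn ℝ s f) {x x' u : E} (hxs : x ∈ s) (hus : u ∈ s) (hfx : DifferentiableAt ℝ f x)
    {η : ℝ} (hη : 0 < η) (hx' : x' ∈ K) (hu : u ∈ K)
    (hstep : IsMinOn (fun z => ‖z - (x - η • gradient f x)‖) K x') :
    f x - f u ≤ (‖x - u‖ ^ 2 - ‖x' - u‖ ^ 2) / (2 * η) + η * ‖gradient f x‖ ^ 2 / 2 := by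
  set g := gradient f x
  have hsub : f x - f u ≤ ⟪g, x - u⟫ := by
    have := hf.inner_gradient_le_sub hxs hus hfx
    rw [← neg_sub x u, inner_neg_right] at this
    linarith
  have hclose : ‖x' - u‖ ≤ ‖x - η • g - u‖ := norm_sub_le_norm_sub_of_isMinOn hK hx' hu hstep
  have hexpand : ‖x - η • g - u‖ ^ 2 = ‖x - u‖ ^ 2 - 2 * η * ⟪g, x - u⟫ + η ^ 2 * ‖g‖ ^ 2 := by
    rw [show x - η • g - u = (x - u) - η • g by abel, norm_sub_sq_real, real_inner_smul_right,
      norm_smul, Real.norm_of_nonneg hη.le, real_inner_comm]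
    ring
  have hsq := pow_le_pow_left₀ (norm_nonneg _) hclose 2
  rw [div_add_div _ _ (by positivity) two_ne_zero, le_div_iff₀ (by positivity)]
  nlinarith

theorem discounted_regret_le_of_projected_gradient_steps {K : Set E} (hK : Convex ℝ K)
    {D G η lam : ℝ} (hη : 0 < η) (hlam0 : 0 ≤ lam) (hlam1 : lam < 1)
    (hdiam : ∀ u ∈ K, ∀ v ∈ K, ‖u - v‖ ≤ D) {T : ℕ} {f : ℕ → E → ℝ}
    (hconv : ∀ t ∈ Icc 1 T, ConvexOn ℝ Set.univ (f t))
    {w : ℕ → E} (hdiff : ∀ t ∈ Icc 1 T, DifferentiableAt ℝ (f t) (w t))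
    (hgrad : ∀ t ∈ Icc 1 T, ‖gradient (f t) (w t)‖ ≤ G) (hw : ∀ t ∈ Icc 1 (T + 1), w t ∈ K)
    (hstep : ∀ t ∈ Icc 1 T,
      IsMinOn (fun z => ‖z - (w t - η • gradient (f t) (w t))‖) K (w (t + 1)))
    {u : E} (hu : u ∈ K) :
    ∑ t ∈ Icc 1 T, lam ^ (T - t) * f t (w t) - ∑ t ∈ Icc 1 T, lam ^ (T - t) * f t u
      ≤ D ^ 2 / (2 * η) + η * G ^ 2 / (2 * (1 - lam)) := by
  set a : ℕ → ℝ := fun t => ‖w t - u‖ ^ 2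
  have hstep_le : ∀ t ∈ Icc 1 T,
      f t (w t) - f t u ≤ (a t - a (t + 1)) / (2 * η) + η * G ^ 2 / 2 := fun t ht => by
    refine ((hconv t ht).sub_le_of_projected_gradient_step hK (Set.mem_univ _) (Set.mem_univ _)
      (hdiff t ht) hη (hw (t + 1) (by simp only [mem_Icc] at ht ⊢; omega)) hu
      (hstep t ht)).trans ?_
    gcongr
    exact hgrad t ht
  have htelescope : ∑ t ∈ Icc 1 T, lam ^ (T - t) * (a t - a (t + 1)) ≤ D ^ 2 := by
    refine (sum_Icc_pow_mul_sub_succ_le hlam0 hlam1.le T fun t ht => ?_).trans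
      (sub_le_self _ (sq_nonneg _))
    exact pow_le_pow_left₀ (norm_nonneg _) (hdiam _ (hw t ht) _ hu) 2
  calc ∑ t ∈ Icc 1 T, lam ^ (T - t) * f t (w t) - ∑ t ∈ Icc 1 T, lam ^ (T - t) * f t u
      = ∑ t ∈ Icc 1 T, lam ^ (T - t) * (f t (w t) - f t u) := by
        rw [← sum_sub_distrib]; simp only [mul_sub]
    _ ≤ ∑ t ∈ Icc 1 T, lam ^ (T - t) * ((a t - a (t + 1)) / (2 * η) + η * G ^ 2 / 2) := by
        gcongr with t ht
        exact hstep_le t ht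
    _ = (∑ t ∈ Icc 1 T, lam ^ (T - t) * (a t - a (t + 1))) / (2 * η)
        + (∑ t ∈ Icc 1 T, lam ^ (T - t)) * (η * G ^ 2 / 2) := by
        rw [sum_div, sum_mul, ← sum_add_distrib]
        exact sum_congr rfl fun t _ => by ring
    _ ≤ D ^ 2 / (2 * η) + (1 - lam)⁻¹ * (η * G ^ 2 / 2) := by
        gcongr
        exact sum_Icc_pow_sub_le_inv_one_sub hlam0 hlam1 T
    _ = D ^ 2 / (2 * η) + η * G ^ 2 / (2 * (1 - lam)) := by
        rw [mul_comm 2 (1 - lam), ← div_div (η * G ^ 2)]; ring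

end InnerProductSpace

theorem sq_div_add_mul_sq_div_eq_of_eq_sqrt {D G c η : ℝ} (hD : D ≠ 0) (hG : G ≠ 0) (hc : 0 < c)
    (hη : η = D * √(2 * c) / G) :
    D ^ 2 / (2 * η) + η * G ^ 2 / (2 * c) = 3 / 4 * (D * G * √2 / √c) := by
  have hs : 0 < √c := Real.sqrt_pos.2 hc
  subst hη
  rw [Real.sqrt_mul zero_le_two]
  field_simp
  rw [Real.sq_sqrt hc.le, Real.sq_sqrt zero_le_two]
  ring

theorem ogd_discounted_regret_tuned_general
    {d : ℕ} (W : Set (EuclideanSpace ℝ (Fin d)))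
    (hWconv : Convex ℝ W)
    (D G : ℝ) (hD : 0 < D) (hG : 0 < G)
    (hdiam : ∀ u ∈ W, ∀ v ∈ W, ‖u - v‖ ≤ D)
    (T : ℕ) (f : ℕ → EuclideanSpace ℝ (Fin d) → ℝ)
    (hconv : ∀ t ∈ Finset.Icc 1 T, ConvexOn ℝ Set.univ (f t))
    (hdiff : ∀ t ∈ Finset.Icc 1 T, Differentiable ℝ (f t))
    (hgrad : ∀ t ∈ Finset.Icc 1 T, ∀ u ∈ W, ‖gradient (f t) u‖ ≤ G)
    (lam : ℝ) (hlam : lam ∈ Set.Ioo (0 : ℝ) 1)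
    (η : ℝ) (hη : η = D * Real.sqrt (2 * (1 - lam)) / G)
    (w : ℕ → EuclideanSpace ℝ (Fin d))
    (hwmem : ∀ t, w (t + 1) ∈ W)
    (hproj : ∀ t, 1 ≤ t → t ≤ T → ∀ u ∈ W,
      ‖w (t + 1) - (w t - η • gradient (f t) (w t))‖ ≤
        ‖u - (w t - η • gradient (f t) (w t))‖)
    (wstar : EuclideanSpace ℝ (Fin d)) (hwstar : wstar ∈ W) :
    ∑ t ∈ Finset.Icc 1 T, lam ^ (T - t) * f t (w t)
      - ∑ t ∈ Finset.Icc 1 T, lam ^ (T - t) * f t wstar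
      ≤ D * G * Real.sqrt 2 / Real.sqrt (1 - lam) := by
  obtain ⟨hlam0, hlam1⟩ := hlam
  have hc : 0 < 1 - lam := sub_pos.2 hlam1
  have hη0 : 0 < η := by rw [hη]; have := Real.sqrt_pos.2 (mul_pos two_pos hc); positivity
  have hw : ∀ t ∈ Icc 1 (T + 1), w t ∈ W := by
    rintro (_ | t) ht
    · simp at ht
    · exact hwmem t
  have hpos : 0 < D * G * √2 / √(1 - lam) := by
    have := Real.sqrt_pos.2 hc; positivity
  calc _ ≤ D ^ 2 / (2 * η) + η * G ^ 2 / (2 * (1 - lam)) :=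
        discounted_regret_le_of_projected_gradient_steps hWconv hη0 hlam0.le hlam1 hdiam hconv
          (fun t ht => hdiff t ht _)
          (fun t ht => hgrad t ht _ (hw t (Icc_subset_Icc_right (by omega) ht))) hw
          (fun t ht => isMinOn_iff.2 (hproj t (mem_Icc.1 ht).1 (mem_Icc.1 ht).2)) hwstar
    _ = 3 / 4 * (D * G * √2 / √(1 - lam)) :=
        sq_div_add_mul_sq_div_eq_of_eq_sqrt hD.ne' hG.ne' hc hη
    _ ≤ _ := by linarith

/-- OGD with step size η = D·√(2(1−λ))/G achieves λ-discounted regret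
at most D·G·√2/√(1−λ). -/
theorem ogd_discounted_regret_tuned
    {d : ℕ} (W : Set (EuclideanSpace ℝ (Fin d)))
    (hWne : W.Nonempty) (hWclosed : IsClosed W) (hWconv : Convex ℝ W)
    (D G : ℝ) (hD : 0 < D) (hG : 0 < G)
    (hdiam : ∀ u ∈ W, ∀ v ∈ W, ‖u - v‖ ≤ D)
    (T : ℕ) (f : ℕ → EuclideanSpace ℝ (Fin d) → ℝ)
    (hconv : ∀ t ∈ Finset.Icc 1 T, ConvexOn ℝ Set.univ (f t))
    (hdiff : ∀ t ∈ Finset.Icc 1 T, Differentiable ℝ (f t))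
    (hgrad : ∀ t ∈ Finset.Icc 1 T, ∀ u ∈ W, ‖gradient (f t) u‖ ≤ G)
    (lam : ℝ) (hlam : lam ∈ Set.Ioo (0 : ℝ) 1)
    (η : ℝ) (hη : η = D * Real.sqrt (2 * (1 - lam)) / G)
    (w : ℕ → EuclideanSpace ℝ (Fin d))
    (hw1 : w 1 ∈ W) (hwmem : ∀ t, w (t + 1) ∈ W)
    (hproj : ∀ t, 1 ≤ t → t ≤ T → ∀ u ∈ W,
      ‖w (t + 1) - (w t - η • gradient (f t) (w t))‖ ≤
        ‖u - (w t - η • gradient (f t) (w t))‖)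
    (wstar : EuclideanSpace ℝ (Fin d)) (hwstar : wstar ∈ W) :
    ∑ t ∈ Finset.Icc 1 T, lam ^ (T - t) * f t (w t)
      - ∑ t ∈ Finset.Icc 1 T, lam ^ (T - t) * f t wstar
      ≤ D * G * Real.sqrt 2 / Real.sqrt (1 - lam) :=
  ogd_discounted_regret_tuned_general W hWconv D G hD hG hdiam T f hconv hdiff hgrad lam hlam η hη w
    hwmem hproj wstar hwstar
end

section
/- Let λ ∈ (0,1) and run OGD with an arbitrary step size η > 0. Then for every w ∈ W, the λ-discounted regret satisfies ∑_{t=1}^T λ^{T−t}·f_t(w_t) − ∑_{t=1}^T λ^{T−t}·f_t(w) ≤ D²/η + η·G²/(2(1−λ)). -/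
open Finset
open scoped RealInnerProductSpace

/-!
By convexity, the regret of round `t` against `w` is at most the linearised regret
`⟪∇f_t(w_t), w_t - w⟫`. Projecting onto the convex set `W` does not increase the distance to
`w ∈ W`, so expanding `‖w_t - η ∇f_t(w_t) - w‖²` bounds the linearised regret by
`(‖w_t - w‖² - ‖w_{t+1} - w‖²) / (2η) + ηG²/2`. With weights `λ^(T-t)`, which increase to `1`
as `t` goes to `T`, the distance terms telescope to at most `D² / (2η)`, and the constant terms
add up to at most `ηG² / (2(1 - λ))` by the geometric series.
-/

theorem ConvexOn.apply_sub_le_of_hasFDerivAt {E : Type*} [NormedAddCommGroup E]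
    [NormedSpace ℝ E] {S : Set E} {f : E → ℝ} {f' : StrongDual ℝ E} {x y : E}
    (hf : ConvexOn ℝ S f) (hx : x ∈ S) (hy : y ∈ S) (hf' : HasFDerivAt f f' x) :
    f' (y - x) ≤ f y - f x := by
  have hline : ConvexOn ℝ (AffineMap.lineMap x y ⁻¹' S) (f ∘ AffineMap.lineMap x y) :=
    hf.comp_affineMap _
  have hderiv : HasDerivAt (f ∘ AffineMap.lineMap (k := ℝ) x y) (f' (y - x)) 0 := by
    have hf'' : HasFDerivAt f f' (AffineMap.lineMap x y (0 : ℝ)) := by simpa using hf'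
    exact hf''.comp_hasDerivAt 0 AffineMap.hasDerivAt_lineMap
  simpa [slope_def_field] using
    hline.le_slope_of_hasDerivAt (by simpa using hx) (by simpa using hy) zero_lt_one hderiv

theorem ConvexOn.inner_sub_le_of_hasGradientAt {F : Type*} [NormedAddCommGroup F]
    [InnerProductSpace ℝ F] [CompleteSpace F] {S : Set F} {f : F → ℝ} {g x y : F}
    (hf : ConvexOn ℝ S f) (hx : x ∈ S) (hy : y ∈ S) (hg : HasGradientAt f g x) :
    ⟪g, y - x⟫ ≤ f y - f x := by
  simpa using hf.apply_sub_le_of_hasFDerivAt hx hy hg.hasFDerivAt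

theorem Convex.norm_sub_le_of_isMinOn {F : Type*} [NormedAddCommGroup F]
    [InnerProductSpace ℝ F] {K : Set F} (hK : Convex ℝ K) {y p z : F} (hp : p ∈ K)
    (hmin : IsMinOn (fun u => ‖u - y‖) K p) (hz : z ∈ K) :
    ‖p - z‖ ≤ ‖y - z‖ := by
  have hinf : ‖y - p‖ = ⨅ u : K, ‖y - u‖ := by
    simpa only [norm_sub_rev y] using (hmin.iInf_eq hp).symm
  have hobtuse : ⟪y - p, z - p⟫ ≤ 0 :=
    (norm_eq_iInf_iff_real_inner_le_zero hK hp).mp hinf z hz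
  have hexpand : ‖y - z‖ ^ 2 = ‖y - p‖ ^ 2 - 2 * ⟪y - p, z - p⟫ + ‖p - z‖ ^ 2 := by
    rw [show y - z = (y - p) - (z - p) by abel, norm_sub_sq_real, norm_sub_rev z p]
  refine (pow_le_pow_iff_left₀ (norm_nonneg _) (norm_nonneg _) two_ne_zero).mp ?_
  nlinarith [sq_nonneg ‖y - p‖]

theorem inner_sub_le_of_isMinOn_projectedStep {F : Type*} [NormedAddCommGroup F]
    [InnerProductSpace ℝ F] {K : Set F} (hK : Convex ℝ K) {x g p z : F} {η : ℝ} (hη : 0 < η)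
    (hp : p ∈ K) (hmin : IsMinOn (fun u => ‖u - (x - η • g)‖) K p) (hz : z ∈ K) :
    ⟪g, x - z⟫ ≤ (‖x - z‖ ^ 2 - ‖p - z‖ ^ 2) / (2 * η) + η / 2 * ‖g‖ ^ 2 := by
  have hcontract := hK.norm_sub_le_of_isMinOn hp hmin hz
  have hexpand : ‖(x - η • g) - z‖ ^ 2 = ‖x - z‖ ^ 2 - 2 * η * ⟪g, x - z⟫ + η ^ 2 * ‖g‖ ^ 2 := by
    rw [show (x - η • g) - z = (x - z) - η • g by abel, norm_sub_sq_real, real_inner_smul_right,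
      norm_smul, Real.norm_of_nonneg hη.le, real_inner_comm]
    ring
  have hsq := pow_le_pow_left₀ (norm_nonneg _) hcontract 2
  rw [div_add' _ _ _ (by positivity), le_div_iff₀ (by positivity)]
  nlinarith

theorem ConvexOn.sub_le_of_isMinOn_projectedGradientStep {F : Type*} [NormedAddCommGroup F]
    [InnerProductSpace ℝ F] [CompleteSpace F] {S K : Set F} (hK : Convex ℝ K) {f : F → ℝ}
    {g x p z : F} {G η : ℝ} (hf : ConvexOn ℝ S f) (hx : x ∈ S) (hzS : z ∈ S)
    (hg : HasGradientAt f g x) (hG : ‖g‖ ≤ G) (hη : 0 < η) (hp : p ∈ K)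
    (hmin : IsMinOn (fun u => ‖u - (x - η • g)‖) K p) (hz : z ∈ K) :
    f x - f z ≤ (‖x - z‖ ^ 2 - ‖p - z‖ ^ 2) / (2 * η) + η * G ^ 2 / 2 := by
  have hgradient : ⟪g, z - x⟫ ≤ f z - f x := hf.inner_sub_le_of_hasGradientAt hx hzS hg
  have hstep := inner_sub_le_of_isMinOn_projectedStep hK hη hp hmin hz
  have hGsq := pow_le_pow_left₀ (norm_nonneg _) hG 2
  rw [← neg_sub x z, inner_neg_right] at hgradient
  nlinarith

theorem sum_Icc_pow_sub_mul_sub_succ_le {a : ℕ → ℝ} {B lam : ℝ} (hlam0 : 0 ≤ lam)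
    (hlam1 : lam ≤ 1) (haB : ∀ t, 1 ≤ t → a t ≤ B) (T : ℕ) :
    ∑ t ∈ Icc 1 T, lam ^ (T - t) * (a t - a (t + 1)) ≤ B - a (T + 1) := by
  induction T with
  | zero => simpa using haB 1 le_rfl
  | succ T ih =>
    have hshift : ∑ t ∈ Icc 1 T, lam ^ (T + 1 - t) * (a t - a (t + 1))
        = lam * ∑ t ∈ Icc 1 T, lam ^ (T - t) * (a t - a (t + 1)) := by
      rw [mul_sum]
      refine sum_congr rfl fun t ht => ?_
      rw [Nat.sub_add_comm (mem_Icc.mp ht).2, pow_succ]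
      ring
    rw [sum_Icc_succ_top (by omega), hshift, Nat.sub_self, pow_zero, one_mul]
    nlinarith [mul_le_mul_of_nonneg_left ih hlam0, haB (T + 1) (by omega)]

theorem sum_Icc_pow_sub_le {lam : ℝ} (hlam0 : 0 ≤ lam) (hlam1 : lam < 1) (T : ℕ) :
    ∑ t ∈ Icc 1 T, lam ^ (T - t) ≤ 1 / (1 - lam) := by
  have hreflect : ∑ t ∈ Icc 1 T, lam ^ (T - t) = ∑ k ∈ Ico 0 T, lam ^ k := by
    rw [← Ico_add_one_right_eq_Icc, sum_Ico_reflect _ _ le_rfl]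
    simp
  simpa [hreflect] using geom_sum_Ico_le_of_lt_one (m := 0) (n := T) hlam0 hlam1

theorem sum_Icc_pow_sub_mul_le_of_le_sub_succ_add {x a : ℕ → ℝ} {B c lam : ℝ} {T : ℕ}
    (hlam0 : 0 ≤ lam) (hlam1 : lam < 1) (hc : 0 ≤ c) (haB : ∀ t, 1 ≤ t → a t ≤ B)
    (haT : 0 ≤ a (T + 1)) (hx : ∀ t ∈ Icc 1 T, x t ≤ a t - a (t + 1) + c) :
    ∑ t ∈ Icc 1 T, lam ^ (T - t) * x t ≤ B + c / (1 - lam) := calc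
  _ ≤ ∑ t ∈ Icc 1 T, lam ^ (T - t) * (a t - a (t + 1) + c) :=
    sum_le_sum fun t ht => mul_le_mul_of_nonneg_left (hx t ht) (by positivity)
  _ = ∑ t ∈ Icc 1 T, lam ^ (T - t) * (a t - a (t + 1)) + c * ∑ t ∈ Icc 1 T, lam ^ (T - t) := by
    rw [mul_sum, ← sum_add_distrib]
    exact sum_congr rfl fun _ _ => by ring
  _ ≤ (B - a (T + 1)) + c * (1 / (1 - lam)) :=
    add_le_add (sum_Icc_pow_sub_mul_sub_succ_le hlam0 hlam1.le haB T)
      (mul_le_mul_of_nonneg_left (sum_Icc_pow_sub_le hlam0 hlam1 T) hc)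
  _ ≤ B + c / (1 - lam) := by rw [mul_one_div]; linarith

theorem ogd_discounted_regret_general_general
    {d : ℕ} (W : Set (EuclideanSpace ℝ (Fin d)))
    (hWconv : Convex ℝ W)
    (D G : ℝ)
    (hdiam : ∀ u ∈ W, ∀ v ∈ W, ‖u - v‖ ≤ D)
    (T : ℕ) (f : ℕ → EuclideanSpace ℝ (Fin d) → ℝ)
    (hconv : ∀ t ∈ Finset.Icc 1 T, ConvexOn ℝ Set.univ (f t))
    (hdiff : ∀ t ∈ Finset.Icc 1 T, Differentiable ℝ (f t))
    (hgrad : ∀ t ∈ Finset.Icc 1 T, ∀ u ∈ W, ‖gradient (f t) u‖ ≤ G)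
    (lam : ℝ) (hlam : lam ∈ Set.Ioo (0 : ℝ) 1)
    (η : ℝ) (hη : 0 < η)
    (w : ℕ → EuclideanSpace ℝ (Fin d))
    (hw1 : w 1 ∈ W) (hwmem : ∀ t, w (t + 1) ∈ W)
    (hproj : ∀ t, 1 ≤ t → t ≤ T → ∀ u ∈ W,
      ‖w (t + 1) - (w t - η • gradient (f t) (w t))‖ ≤
        ‖u - (w t - η • gradient (f t) (w t))‖)
    (wstar : EuclideanSpace ℝ (Fin d)) (hwstar : wstar ∈ W) :
    ∑ t ∈ Finset.Icc 1 T, lam ^ (T - t) * f t (w t)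
      - ∑ t ∈ Finset.Icc 1 T, lam ^ (T - t) * f t wstar
      ≤ D ^ 2 / η + η * G ^ 2 / (2 * (1 - lam)) := by
  have hmem : ∀ t, 1 ≤ t → w t ∈ W
    | 1, _ => hw1
    | t + 2, _ => hwmem (t + 1)
  set a : ℕ → ℝ := fun t => ‖w t - wstar‖ ^ 2 / (2 * η)
  have hround : ∀ t ∈ Icc 1 T, f t (w t) - f t wstar ≤ a t - a (t + 1) + η * G ^ 2 / 2 := by
    intro t ht
    obtain ⟨h1t, htT⟩ := mem_Icc.mp ht
    rw [← sub_div]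
    exact (hconv t ht).sub_le_of_isMinOn_projectedGradientStep hWconv trivial trivial
      (hdiff t ht (w t)).hasGradientAt (hgrad t ht _ (hmem t h1t)) hη (hwmem t) (isMinOn_iff.mpr (hproj t h1t htT)) hwstar
  have haB : ∀ t, 1 ≤ t → a t ≤ D ^ 2 / (2 * η) := fun t ht => by
    dsimp only [a]
    gcongr
    exact hdiam _ (hmem t ht) _ hwstar
  have hregret := sum_Icc_pow_sub_mul_le_of_le_sub_succ_add hlam.1.le hlam.2 (by positivity) haB
    (by positivity) hround
  rw [← sum_sub_distrib]
  simp_rw [← mul_sub]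
  refine hregret.trans ?_
  rw [div_div]
  gcongr ?_ + _
  exact div_le_div_of_nonneg_left (sq_nonneg D) hη (by linarith)

/-- OGD with arbitrary step size η > 0 achieves λ-discounted regret
at most D²/η + η·G²/(2(1−λ)). -/
theorem ogd_discounted_regret_general
    {d : ℕ} (W : Set (EuclideanSpace ℝ (Fin d)))
    (hWne : W.Nonempty) (hWclosed : IsClosed W) (hWconv : Convex ℝ W)
    (D G : ℝ) (hD : 0 < D) (hG : 0 < G)
    (hdiam : ∀ u ∈ W, ∀ v ∈ W, ‖u - v‖ ≤ D)
    (T : ℕ) (f : ℕ → EuclideanSpace ℝ (Fin d) → ℝ)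
    (hconv : ∀ t ∈ Finset.Icc 1 T, ConvexOn ℝ Set.univ (f t))
    (hdiff : ∀ t ∈ Finset.Icc 1 T, Differentiable ℝ (f t))
    (hgrad : ∀ t ∈ Finset.Icc 1 T, ∀ u ∈ W, ‖gradient (f t) u‖ ≤ G)
    (lam : ℝ) (hlam : lam ∈ Set.Ioo (0 : ℝ) 1)
    (η : ℝ) (hη : 0 < η)
    (w : ℕ → EuclideanSpace ℝ (Fin d))
    (hw1 : w 1 ∈ W) (hwmem : ∀ t, w (t + 1) ∈ W)
    (hproj : ∀ t, 1 ≤ t → t ≤ T → ∀ u ∈ W,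
      ‖w (t + 1) - (w t - η • gradient (f t) (w t))‖ ≤
        ‖u - (w t - η • gradient (f t) (w t))‖)
    (wstar : EuclideanSpace ℝ (Fin d)) (hwstar : wstar ∈ W) :
    ∑ t ∈ Finset.Icc 1 T, lam ^ (T - t) * f t (w t)
      - ∑ t ∈ Finset.Icc 1 T, lam ^ (T - t) * f t wstar
      ≤ D ^ 2 / η + η * G ^ 2 / (2 * (1 - lam)) :=
  ogd_discounted_regret_general_general W hWconv D G hdiam T f hconv hdiff hgrad lam hlam η hη w hw1
    hwmem hproj wstar hwstar
end

section
/- Suppose Z ≤ 1/e, n ≥ max{8e, 16·ln(1/Z)} and U(n) ≥ 22. For any real bit sequence b_1,…,b_T with |b_t| ≤ 1 and ρ = 1 − 1/n, the discounted payoff of DNP-cu satisfies ∑_{t=1}^T ρ^{T−t}·g(x_t)·b_t ≥ ∑_{t=1}^T ρ^{T−t}·b_t − Z/(2(1−ρ)) − U(n) − 1. -/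
/-!
The potential `F(x) = ∫₀ˣ (1 - g)` pays for every round: with `ρ = 1 - 1/n`,
`(1 - g(x_t)) b_t ≤ F(x_{t+1}) - ρ F(x_t) + Z/2`.
For `x_t ≤ 0` (where `g = 0`, `F(x) = x`) and `x_t > U` (where `g = 1` and `F` is constant) this is
direct. On `(0, U]` it comes from the linear ODE `g̃' = Z/8 + x g̃/(8n)`: it gives `g̃ ≤ x g̃'`,
hence `x - F(x) ≤ x g̃(x)/2`, and it bounds the second-order term of a move `c ∈ [-2, 1]` by
`c (g(x + c) - g̃(x)) ≤ c² g̃'(ξ) ≤ 4 g̃'(x)`; the moves stay in that range because the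
hypotheses on `n` and `Z` force `U ≤ n`. Summing with weights `ρ^(T-t)` telescopes, the constants
add up to at most `Z/(2(1-ρ))`, and `F ≤ F(U) ≤ U`.
-/

noncomputable def erf (x : ℝ) : ℝ := ∫ s in (0:ℝ)..x, Real.exp (-(s ^ 2) / 2)

noncomputable def gtilde (n Z x : ℝ) : ℝ :=
  Real.sqrt (n / 8) * Z * erf (x / Real.sqrt (8 * n)) * Real.exp (x ^ 2 / (16 * n))

noncomputable def gfun (n Z x : ℝ) : ℝ := min (max (gtilde n Z x) 0) 1

open Real Set

lemma continuous_exp_neg_sq_div_two : Continuous fun s : ℝ => exp (-(s ^ 2) / 2) := by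
  fun_prop

lemma hasDerivAt_erf (x : ℝ) : HasDerivAt erf (exp (-(x ^ 2) / 2)) x :=
  (continuous_exp_neg_sq_div_two.integral_hasStrictDerivAt 0 x).hasDerivAt

lemma erf_zero : erf 0 = 0 := intervalIntegral.integral_same

lemma monotone_erf : Monotone erf :=
  monotone_of_hasDerivAt_nonneg hasDerivAt_erf fun _ => (exp_pos _).le

lemma erf_nonneg {x : ℝ} (hx : 0 ≤ x) : 0 ≤ erf x := erf_zero ▸ monotone_erf hx

lemma erf_nonpos {x : ℝ} (hx : x ≤ 0) : erf x ≤ 0 := erf_zero ▸ monotone_erf hx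

lemma erf_le_self {x : ℝ} (hx : 0 ≤ x) : erf x ≤ x := by
  have h := image_sub_le_mul_sub_of_deriv_le (fun y => (hasDerivAt_erf y).differentiableAt)
    (fun y => by rw [(hasDerivAt_erf y).deriv]; exact exp_le_one_iff.2 (by nlinarith)) hx
  rw [erf_zero] at h
  linarith

lemma sub_pow_three_div_six_le_erf {x : ℝ} (hx : 0 ≤ x) : x - x ^ 3 / 6 ≤ erf x := by
  have hmono : Monotone fun y => erf y - (y - y ^ 3 / 6) := by
    refine monotone_of_hasDerivAt_nonneg
      (fun y => (hasDerivAt_erf y).sub ((hasDerivAt_id y).sub ((hasDerivAt_pow 3 y).div_const 6)))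
      fun y => ?_
    have := add_one_le_exp (-(y ^ 2) / 2)
    simp only [Pi.zero_apply]
    linarith
  have := hmono hx
  simp only [erf_zero] at this
  linarith

section gtilde

variable {n Z : ℝ}

noncomputable def gtildeDeriv (n Z x : ℝ) : ℝ := Z / 8 + x * gtilde n Z x / (8 * n)

lemma sqrt_div_eight_mul_div_sqrt (hn : 0 < n) (x : ℝ) :
    √(n / 8) * (x / √(8 * n)) = x / 8 := by
  have h : √(n / 8) / √(8 * n) = 1 / 8 := by
    rw [← sqrt_div (by positivity), show n / 8 / (8 * n) = (1 / 8) ^ 2 by field_simp,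
      sqrt_sq (by norm_num)]
  calc √(n / 8) * (x / √(8 * n)) = x * (√(n / 8) / √(8 * n)) := by ring
    _ = x / 8 := by rw [h]; ring

lemma div_sqrt_eight_mul_sq (hn : 0 ≤ n) (x : ℝ) : (x / √(8 * n)) ^ 2 = x ^ 2 / (8 * n) := by
  rw [div_pow, sq_sqrt (by positivity)]

lemma hasDerivAt_gtilde (hn : 0 < n) (x : ℝ) :
    HasDerivAt (gtilde n Z) (gtildeDeriv n Z x) x := by
  have herf := (hasDerivAt_erf (x / √(8 * n))).comp x ((hasDerivAt_id x).div_const √(8 * n))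
  have hexp := ((hasDerivAt_pow 2 x).div_const (16 * n)).exp
  refine HasDerivAt.congr_deriv (f := gtilde n Z) ((herf.const_mul (√(n / 8) * Z)).mul hexp) ?_
  have hinv : exp (-(x / √(8 * n)) ^ 2 / 2) * exp (x ^ 2 / (16 * n)) = 1 := by
    rw [← exp_add, div_sqrt_eight_mul_sq hn.le, ← exp_zero]
    congr 1
    field_simp
    ring
  have hsq := sqrt_div_eight_mul_div_sqrt hn 1
  simp only [gtildeDeriv, gtilde, Function.comp_apply, id, Nat.cast_ofNat, pow_one,
    Nat.add_one_sub_one]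
  linear_combination (Z * (√(n / 8) * (1 / √(8 * n)))) * hinv + Z * hsq

lemma continuous_gtilde (hn : 0 < n) : Continuous (gtilde n Z) :=
  continuous_iff_continuousAt.2 fun x => (hasDerivAt_gtilde hn x).continuousAt

lemma gtilde_zero : gtilde n Z 0 = 0 := by simp [gtilde, erf_zero]

lemma gtilde_nonneg (hZ : 0 ≤ Z) {x : ℝ} (hx : 0 ≤ x) : 0 ≤ gtilde n Z x := by
  have := erf_nonneg (div_nonneg hx (sqrt_nonneg (8 * n)))
  unfold gtilde
  positivity

lemma gtilde_nonpos (hZ : 0 ≤ Z) {x : ℝ} (hx : x ≤ 0) : gtilde n Z x ≤ 0 := by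
  have := erf_nonpos (div_nonpos_of_nonpos_of_nonneg hx (sqrt_nonneg (8 * n)))
  unfold gtilde
  exact mul_nonpos_of_nonpos_of_nonneg
    (mul_nonpos_of_nonneg_of_nonpos (by positivity) this) (exp_pos _).le

lemma gtilde_le_mul_exp (hn : 0 < n) (hZ : 0 ≤ Z) {x : ℝ} (hx : 0 ≤ x) :
    gtilde n Z x ≤ x * Z / 8 * exp (x ^ 2 / (16 * n)) := by
  calc gtilde n Z x ≤ √(n / 8) * Z * (x / √(8 * n)) * exp (x ^ 2 / (16 * n)) := by
        unfold gtilde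
        gcongr
        exact erf_le_self (by positivity)
    _ = x * Z / 8 * exp (x ^ 2 / (16 * n)) := by
        linear_combination (Z * exp (x ^ 2 / (16 * n))) * sqrt_div_eight_mul_div_sqrt hn x

lemma gtilde_le_of_sq_le (hn : 0 < n) (hZ : 0 ≤ Z) {x : ℝ} (hx : 0 ≤ x) (hxn : x ^ 2 ≤ 16 * n) :
    gtilde n Z x ≤ 3 * x * Z / 8 := by
  have hexp : exp (x ^ 2 / (16 * n)) ≤ 3 :=
    calc exp (x ^ 2 / (16 * n)) ≤ exp 1 := exp_le_exp.2 ((div_le_one (by positivity)).2 hxn)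
      _ ≤ 3 := by linarith [exp_one_lt_d9]
  calc gtilde n Z x ≤ x * Z / 8 * exp (x ^ 2 / (16 * n)) := gtilde_le_mul_exp hn hZ hx
    _ ≤ x * Z / 8 * 3 := by gcongr
    _ = 3 * x * Z / 8 := by ring

lemma gtildeDeriv_nonneg (hn : 0 < n) (hZ : 0 ≤ Z) {x : ℝ} (hx : 0 ≤ x) :
    0 ≤ gtildeDeriv n Z x := by
  have := gtilde_nonneg (n := n) hZ hx
  unfold gtildeDeriv
  positivity

lemma monotoneOn_gtilde (hn : 0 < n) (hZ : 0 ≤ Z) : MonotoneOn (gtilde n Z) (Ici 0) :=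
  monotoneOn_of_hasDerivWithinAt_nonneg (convex_Ici 0) (continuous_gtilde hn).continuousOn
    (fun x _ => (hasDerivAt_gtilde hn x).hasDerivWithinAt)
    fun _ hx => gtildeDeriv_nonneg hn hZ (interior_subset hx)

lemma monotoneOn_gtildeDeriv (hn : 0 < n) (hZ : 0 ≤ Z) :
    MonotoneOn (gtildeDeriv n Z) (Ici 0) := by
  intro a ha b hb hab
  have := monotoneOn_gtilde hn hZ ha hb hab
  have := gtilde_nonneg (n := n) hZ ha
  unfold gtildeDeriv
  gcongr

lemma gtilde_sub_le_mul_gtildeDeriv (hn : 0 < n) (hZ : 0 ≤ Z) {α β : ℝ} (hα : 0 ≤ α)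
    (hαβ : α ≤ β) : gtilde n Z β - gtilde n Z α ≤ gtildeDeriv n Z β * (β - α) :=
  (convex_Icc α β).image_sub_le_mul_sub_of_deriv_le (continuous_gtilde hn).continuousOn
    (fun x _ => (hasDerivAt_gtilde hn x).differentiableAt.differentiableWithinAt)
    (fun x hx => by
      rw [interior_Icc] at hx
      rw [(hasDerivAt_gtilde hn x).deriv]
      exact monotoneOn_gtildeDeriv hn hZ (hα.trans hx.1.le) (hα.trans hαβ) hx.2.le)
    α (left_mem_Icc.2 hαβ) β (right_mem_Icc.2 hαβ) hαβ

lemma gtilde_le_mul_gtildeDeriv (hn : 0 < n) (hZ : 0 ≤ Z) {x : ℝ} (hx : 0 ≤ x) :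
    gtilde n Z x ≤ x * gtildeDeriv n Z x := by
  set t := x ^ 2 / (16 * n)
  have ht : 0 ≤ t := by positivity
  have hexp : exp t * (1 - x ^ 2 / (8 * n)) ≤ 1 :=
    calc exp t * (1 - x ^ 2 / (8 * n)) ≤ exp t * exp (-t) := by
          gcongr
          linarith [add_one_le_exp (-t), show x ^ 2 / (8 * n) = 2 * t by ring]
      _ = 1 := by rw [← exp_add, add_neg_cancel, exp_zero]
  have herf := erf_le_self (div_nonneg hx (sqrt_nonneg (8 * n)))
  have herf0 := erf_nonneg (div_nonneg hx (sqrt_nonneg (8 * n)))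
  have key : gtilde n Z x * (1 - x ^ 2 / (8 * n)) ≤ x * Z / 8 :=
    calc gtilde n Z x * (1 - x ^ 2 / (8 * n))
        = √(n / 8) * Z * erf (x / √(8 * n)) * (exp t * (1 - x ^ 2 / (8 * n))) := by
          unfold gtilde; ring
      _ ≤ √(n / 8) * Z * erf (x / √(8 * n)) * 1 := by gcongr
      _ ≤ √(n / 8) * Z * (x / √(8 * n)) * 1 := by gcongr
      _ = x * Z / 8 := by linear_combination Z * sqrt_div_eight_mul_div_sqrt hn x
  calc gtilde n Z x
      = gtilde n Z x * (1 - x ^ 2 / (8 * n)) + gtilde n Z x * (x ^ 2 / (8 * n)) := by ring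
    _ ≤ x * Z / 8 + gtilde n Z x * (x ^ 2 / (8 * n)) := by linarith
    _ = x * gtildeDeriv n Z x := by unfold gtildeDeriv; ring

lemma add_one_mul_gtilde_add_one_le (hn : 1 ≤ n) (hZ : 0 ≤ Z) {x : ℝ} (hx : 0 ≤ x)
    (hxn : x ≤ n) : (x + 1) * gtilde n Z (x + 1) ≤ 4 * x * gtilde n Z x + 3 * n * Z := by
  have hn0 : 0 < n := by linarith
  set A := gtilde n Z x
  set B := gtilde n Z (x + 1)
  have hA : 0 ≤ A := gtilde_nonneg hZ hx
  rcases le_or_gt 1 x with h1x | hx1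
  · have hBA := gtilde_sub_le_mul_gtildeDeriv hn0 hZ hx (le_add_of_nonneg_right zero_le_one)
    rw [add_sub_cancel_left, mul_one, gtildeDeriv, ← sub_nonneg] at hBA
    have hden : 0 < 8 * n - (x + 1) := by linarith
    have hB' : B * (8 * n - (x + 1)) ≤ 8 * n * A + n * Z := by
      have := mul_nonneg (by positivity : (0 : ℝ) ≤ 8 * n) hBA
      field_simp at this
      linarith
    refine le_of_mul_le_mul_right ?_ hden
    calc (x + 1) * B * (8 * n - (x + 1)) = (x + 1) * (B * (8 * n - (x + 1))) := by ring
      _ ≤ (x + 1) * (8 * n * A + n * Z) := by gcongr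
      _ ≤ (4 * x * A + 3 * n * Z) * (8 * n - (x + 1)) := by
          nlinarith [mul_nonneg (mul_nonneg hn0.le hA) (show (0:ℝ) ≤ x - 1 by linarith),
            mul_nonneg (mul_nonneg hx hA) (show (0:ℝ) ≤ n - x by linarith),
            mul_nonneg (mul_nonneg hn0.le hZ) (show (0:ℝ) ≤ n - x by linarith),
            mul_nonneg (mul_nonneg hn0.le hZ) (show (0:ℝ) ≤ n - 1 by linarith)]
  · have hB2 : B ≤ 3 * 2 * Z / 8 :=
      (monotoneOn_gtilde hn0 hZ (by simp; linarith) (by norm_num) (by linarith)).trans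
        (gtilde_le_of_sq_le hn0 hZ (by norm_num) (by linarith))
    nlinarith [mul_nonneg hx hA]

lemma gtildeDeriv_add_one_le (hn : 1 ≤ n) (hZ : 0 ≤ Z) {x : ℝ} (hx : 0 ≤ x) (hxn : x ≤ n) :
    gtildeDeriv n Z (x + 1) ≤ 4 * gtildeDeriv n Z x := by
  have h := add_one_mul_gtilde_add_one_le hn hZ hx hxn
  have hn0 : 0 < n := by linarith
  unfold gtildeDeriv
  rw [div_add_div _ _ (by norm_num) (by positivity),
    div_add_div _ _ (by norm_num) (by positivity), mul_div_assoc',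
    div_le_div_iff₀ (by positivity) (by positivity)]
  nlinarith

lemma one_lt_gtilde_self (hZ : 0 < Z) (he : 8 * exp 1 ≤ n) (hlog : 16 * log (1 / Z) ≤ n) :
    1 < gtilde n Z n := by
  have hn0 : 0 < n := by linarith [exp_pos 1]
  have harg : n / √(8 * n) = √(n / 8) := by
    rw [← sqrt_sq (by positivity : 0 ≤ n / √(8 * n)), div_sqrt_eight_mul_sq hn0.le]
    congr 1
    field_simp
  have hZexp : 1 ≤ Z * exp (n / 16) := by
    have := (log_le_iff_le_exp (by positivity)).1 (show log (1 / Z) ≤ n / 16 by linarith)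
    rw [div_le_iff₀ hZ] at this
    linarith
  have hs : 8 / 5 ≤ √(n / 8) := by
    rw [le_sqrt (by norm_num) (by positivity)]
    linarith [exp_one_gt_d9]
  have herf : 5 / 6 ≤ erf √(n / 8) := by
    have := sub_pow_three_div_six_le_erf zero_le_one
    have := monotone_erf (show (1 : ℝ) ≤ √(n / 8) by linarith)
    norm_num at *
    linarith
  have hexp : n ^ 2 / (16 * n) = n / 16 := by field_simp
  calc (1 : ℝ) < 8 / 5 * (5 / 6) * 1 := by norm_num
    _ ≤ √(n / 8) * erf √(n / 8) * (Z * exp (n / 16)) := by gcongr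
    _ = gtilde n Z n := by rw [gtilde, harg, hexp]; ring

lemma le_of_gtilde_eq_one (hZ : 0 < Z) (he : 8 * exp 1 ≤ n) (hlog : 16 * log (1 / Z) ≤ n)
    {U : ℝ} (hU : gtilde n Z U = 1) : U ≤ n := by
  have hn0 : 0 < n := by linarith [exp_pos 1]
  refine le_of_not_gt fun hnU => ?_
  have := monotoneOn_gtilde hn0 hZ.le (mem_Ici.2 hn0.le) (mem_Ici.2 (hn0.trans hnU).le) hnU.le
  linarith [one_lt_gtilde_self hZ he hlog]

end gtilde

section gfun

variable {n Z U : ℝ}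

lemma gfun_nonneg (x : ℝ) : 0 ≤ gfun n Z x := le_min (le_max_right _ _) zero_le_one

lemma gfun_le_one (x : ℝ) : gfun n Z x ≤ 1 := min_le_right _ _

lemma gfun_of_nonpos (hZ : 0 ≤ Z) {x : ℝ} (hx : x ≤ 0) : gfun n Z x = 0 := by
  rw [gfun, max_eq_right (gtilde_nonpos hZ hx), min_eq_left zero_le_one]

lemma gfun_le_gtilde (hZ : 0 ≤ Z) {x : ℝ} (hx : 0 ≤ x) : gfun n Z x ≤ gtilde n Z x :=
  (min_le_left _ _).trans (max_eq_left (gtilde_nonneg hZ hx)).le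

lemma gfun_eq_gtilde (hn : 0 < n) (hZ : 0 ≤ Z) (hU : gtilde n Z U = 1) {x : ℝ}
    (hx : 0 ≤ x) (hxU : x ≤ U) : gfun n Z x = gtilde n Z x := by
  have := monotoneOn_gtilde hn hZ (mem_Ici.2 hx) (mem_Ici.2 (hx.trans hxU)) hxU
  rw [gfun, max_eq_left (gtilde_nonneg hZ hx), min_eq_left (hU ▸ this)]

lemma gfun_eq_gtilde_max (hn : 0 < n) (hZ : 0 ≤ Z) (hU : gtilde n Z U = 1) {x : ℝ}
    (hxU : x ≤ U) : gfun n Z x = gtilde n Z (max x 0) := by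
  rcases le_total 0 x with hx | hx
  · rw [max_eq_left hx, gfun_eq_gtilde hn hZ hU hx hxU]
  · rw [max_eq_right hx, gtilde_zero, gfun_of_nonpos hZ hx]

lemma gfun_of_le (hn : 0 < n) (hZ : 0 ≤ Z) (hU0 : 0 ≤ U) (hU : gtilde n Z U = 1) {x : ℝ}
    (hUx : U ≤ x) : gfun n Z x = 1 := by
  have := monotoneOn_gtilde hn hZ (mem_Ici.2 hU0) (mem_Ici.2 (hU0.trans hUx)) hUx
  rw [gfun, max_eq_left (by linarith), min_eq_right (hU ▸ this)]

lemma monotone_gfun (hn : 0 < n) (hZ : 0 ≤ Z) : Monotone (gfun n Z) := by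
  intro a b hab
  rcases le_total a 0 with ha | ha
  · exact (gfun_of_nonpos hZ ha).trans_le (gfun_nonneg b)
  · exact min_le_min_right _ (max_le_max_right _
      (monotoneOn_gtilde hn hZ (mem_Ici.2 ha) (mem_Ici.2 (ha.trans hab)) hab))

lemma continuous_gfun (hn : 0 < n) : Continuous (gfun n Z) :=
  ((continuous_gtilde hn).max continuous_const).min continuous_const

end gfun

section potential

variable {n Z U : ℝ}

noncomputable def potential (n Z x : ℝ) : ℝ := ∫ s in (0 : ℝ)..x, (1 - gfun n Z s)

lemma hasDerivAt_potential (hn : 0 < n) (x : ℝ) :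
    HasDerivAt (potential n Z) (1 - gfun n Z x) x :=
  ((continuous_const.sub (continuous_gfun hn)).integral_hasStrictDerivAt 0 x).hasDerivAt

lemma differentiable_potential (hn : 0 < n) : Differentiable ℝ (potential n Z) :=
  fun x => (hasDerivAt_potential hn x).differentiableAt

lemma potential_zero : potential n Z 0 = 0 := intervalIntegral.integral_same

lemma potential_sub_le (hn : 0 < n) (hZ : 0 ≤ Z) {a b : ℝ} (hab : a ≤ b) :
    potential n Z b - potential n Z a ≤ (1 - gfun n Z a) * (b - a) :=
  (convex_Icc a b).image_sub_le_mul_sub_of_deriv_le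
    (differentiable_potential hn).continuous.continuousOn
    (differentiable_potential hn).differentiableOn
    (fun x hx => by
      rw [interior_Icc] at hx
      rw [(hasDerivAt_potential hn x).deriv]
      linarith [monotone_gfun hn hZ hx.1.le])
    a (left_mem_Icc.2 hab) b (right_mem_Icc.2 hab) hab

lemma le_potential_sub (hn : 0 < n) (hZ : 0 ≤ Z) {a b : ℝ} (hab : a ≤ b) :
    (1 - gfun n Z b) * (b - a) ≤ potential n Z b - potential n Z a :=
  (convex_Icc a b).mul_sub_le_image_sub_of_le_deriv
    (differentiable_potential hn).continuous.continuousOn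
    (differentiable_potential hn).differentiableOn
    (fun x hx => by
      rw [interior_Icc] at hx
      rw [(hasDerivAt_potential hn x).deriv]
      linarith [monotone_gfun hn hZ hx.2.le])
    a (left_mem_Icc.2 hab) b (right_mem_Icc.2 hab) hab

lemma potential_of_nonpos (hn : 0 < n) (hZ : 0 ≤ Z) {x : ℝ} (hx : x ≤ 0) :
    potential n Z x = x := by
  have h₁ := potential_sub_le hn hZ hx
  have h₂ := le_potential_sub hn hZ hx
  rw [potential_zero, gfun_of_nonpos hZ hx] at h₁
  rw [potential_zero, gfun_of_nonpos hZ le_rfl] at h₂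
  linarith

lemma monotone_potential (hn : 0 < n) : Monotone (potential n Z) :=
  monotone_of_hasDerivAt_nonneg (hasDerivAt_potential hn) fun x => sub_nonneg.2 (gfun_le_one x)

lemma potential_le_self (hn : 0 < n) (hZ : 0 ≤ Z) {x : ℝ} (hx : 0 ≤ x) : potential n Z x ≤ x := by
  have := potential_sub_le hn hZ hx
  rw [potential_zero, gfun_of_nonpos hZ le_rfl] at this
  linarith

lemma potential_eq_of_le (hn : 0 < n) (hZ : 0 ≤ Z) (hU0 : 0 ≤ U) (hU : gtilde n Z U = 1)
    {x : ℝ} (hUx : U ≤ x) : potential n Z x = potential n Z U := by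
  have h₁ := potential_sub_le hn hZ hUx
  have h₂ := le_potential_sub hn hZ hUx
  rw [gfun_of_le hn hZ hU0 hU le_rfl] at h₁
  rw [gfun_of_le hn hZ hU0 hU hUx] at h₂
  linarith

lemma potential_le (hn : 0 < n) (hZ : 0 ≤ Z) (hU0 : 0 ≤ U) (hU : gtilde n Z U = 1) (x : ℝ) :
    potential n Z x ≤ U :=
  calc potential n Z x ≤ potential n Z (max x U) := monotone_potential hn (le_max_left x U)
    _ = potential n Z U := potential_eq_of_le hn hZ hU0 hU (le_max_right x U)
    _ ≤ U := potential_le_self hn hZ hU0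

lemma sub_le_potential_of_le_one (hn : 1 ≤ n) (hZ : 0 ≤ Z) {x : ℝ} (hx : x ≤ 1) :
    x - Z / 2 ≤ potential n Z x := by
  have hn0 : 0 < n := by linarith
  rcases le_or_gt x 0 with hx0 | hx0
  · rw [potential_of_nonpos hn0 hZ hx0]
    linarith
  · have hg : gfun n Z x ≤ 3 * 1 * Z / 8 :=
      calc gfun n Z x ≤ gfun n Z 1 := monotone_gfun hn0 hZ hx
        _ ≤ gtilde n Z 1 := gfun_le_gtilde hZ zero_le_one
        _ ≤ 3 * 1 * Z / 8 := gtilde_le_of_sq_le hn0 hZ zero_le_one (by linarith)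
    have := le_potential_sub hn0 hZ hx0.le
    rw [potential_zero] at this
    nlinarith [mul_nonneg (gfun_nonneg (n := n) (Z := Z) x) (sub_nonneg.2 hx)]

lemma sub_potential_le_half (hn : 0 < n) (hZ : 0 ≤ Z) (hU : gtilde n Z U = 1) {x : ℝ}
    (hx : 0 ≤ x) (hxU : x ≤ U) : x - potential n Z x ≤ x * gtilde n Z x / 2 := by
  -- `H = s g̃ - 2 (s - F)` has derivative `s g̃' - g̃ ≥ 0` on `[0, U]`, where `g = g̃`.
  let H := fun s => s * gtilde n Z s - 2 * (s - potential n Z s)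
  have hH : ∀ s, HasDerivAt H
      (1 * gtilde n Z s + s * gtildeDeriv n Z s - 2 * (1 - (1 - gfun n Z s))) s := fun s =>
    ((hasDerivAt_id s).mul (hasDerivAt_gtilde hn s)).sub
      (((hasDerivAt_id s).sub (hasDerivAt_potential hn s)).const_mul 2)
  have hmono : MonotoneOn H (Icc 0 U) :=
    monotoneOn_of_hasDerivWithinAt_nonneg (convex_Icc 0 U)
      (continuous_iff_continuousAt.2 fun s => (hH s).continuousAt).continuousOn
      (fun s _ => (hH s).hasDerivWithinAt)
      (fun s hs => by
        rw [interior_Icc] at hs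
        rw [gfun_eq_gtilde hn hZ hU hs.1.le hs.2.le]
        linarith [gtilde_le_mul_gtildeDeriv hn hZ (n := n) hs.1.le])
  have := hmono ⟨le_rfl, hx.trans hxU⟩ ⟨hx, hxU⟩ hx
  simp only [H, zero_mul, sub_zero, potential_zero, mul_zero] at this
  linarith

lemma half_le_potential (hn : 0 < n) (hZ : 0 ≤ Z) (hU0 : 0 ≤ U) (hU : gtilde n Z U = 1) :
    U / 2 ≤ potential n Z U := by
  have := sub_potential_le_half hn hZ hU hU0 le_rfl
  rw [hU] at this
  linarith

lemma potential_sub_le_sq (hn : 0 < n) (hZ : 0 ≤ Z) (hU : gtilde n Z U = 1) {x : ℝ}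
    (hx : 0 ≤ x) (hxU : x ≤ U) :
    potential n Z U - potential n Z x ≤ gtildeDeriv n Z U * (U - x) ^ 2 := by
  have hF := potential_sub_le hn hZ hxU
  have hg := gtilde_sub_le_mul_gtildeDeriv hn hZ hx hxU
  rw [gfun_eq_gtilde hn hZ hU hx hxU] at hF
  rw [hU] at hg
  nlinarith [sub_nonneg.2 hxU]

lemma mul_one_sub_gfun_le_potential_add_sub (hn : 0 < n) (hZ : 0 ≤ Z) (x c : ℝ) :
    c * (1 - gfun n Z (x + c)) ≤ potential n Z (x + c) - potential n Z x := by
  rcases le_total 0 c with hc | hc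
  · have := le_potential_sub hn hZ (le_add_of_nonneg_right hc : x ≤ x + c)
    rw [add_sub_cancel_left] at this
    linarith
  · have := potential_sub_le hn hZ (add_le_of_nonpos_right hc : x + c ≤ x)
    rw [sub_add_cancel_left] at this
    linarith

end potential

noncomputable def dnpStep (U ρ x b : ℝ) : ℝ :=
  if (0 ≤ x ∧ x ≤ U) ∨ (x < 0 ∧ 0 < b) ∨ (U < x ∧ b < 0) then ρ * x + b else ρ * x

section step

variable {n Z U b : ℝ}

lemma mul_gfun_add_sub_gtilde_le (hn : 1 ≤ n) (hZ : 0 ≤ Z) (hUn : U ≤ n)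
    (hU : gtilde n Z U = 1) {x c : ℝ} (hx : 0 ≤ x) (hxU : x ≤ U) (hc₁ : -2 ≤ c) (hc₂ : c ≤ 1) :
    c * (gfun n Z (x + c) - gtilde n Z x) ≤ 4 * gtildeDeriv n Z x := by
  have hn0 : 0 < n := by linarith
  rcases le_total 0 c with hc | hc
  · have hxc : 0 ≤ x + c := by linarith
    have hg := gfun_le_gtilde (n := n) hZ hxc
    have hslope := gtilde_sub_le_mul_gtildeDeriv hn0 hZ hx (le_add_of_nonneg_right hc)
    have hD := monotoneOn_gtildeDeriv hn0 hZ (mem_Ici.2 hxc)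
      (mem_Ici.2 (by linarith : (0 : ℝ) ≤ x + 1)) (by linarith : x + c ≤ x + 1)
    have hD₁ := gtildeDeriv_add_one_le hn hZ hx (hxU.trans hUn)
    have hD₀ := gtildeDeriv_nonneg hn0 hZ hxc
    rw [add_sub_cancel_left] at hslope
    calc c * (gfun n Z (x + c) - gtilde n Z x) ≤ c * (gtildeDeriv n Z (x + c) * c) := by
          gcongr; linarith
      _ = (c * c) * gtildeDeriv n Z (x + c) := by ring
      _ ≤ 1 * gtildeDeriv n Z (x + c) := by gcongr; nlinarith
      _ ≤ 4 * gtildeDeriv n Z x := by linarith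
  · have hm : max (x + c) 0 ≤ x := max_le (by linarith) hx
    have hslope := gtilde_sub_le_mul_gtildeDeriv hn0 hZ (le_max_right (x + c) 0) hm
    have hD₀ := gtildeDeriv_nonneg hn0 hZ hx
    rw [gfun_eq_gtilde_max hn0 hZ hU (by linarith)]
    calc c * (gtilde n Z (max (x + c) 0) - gtilde n Z x)
        = -c * (gtilde n Z x - gtilde n Z (max (x + c) 0)) := by ring
      _ ≤ -c * (gtildeDeriv n Z x * -c) := by
          gcongr
          · linarith
          · exact hslope.trans (by gcongr; linarith [le_max_left (x + c) 0])
      _ = (c * c) * gtildeDeriv n Z x := by ring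
      _ ≤ 4 * gtildeDeriv n Z x := by gcongr; nlinarith

lemma potential_step_of_nonpos (hn : 1 ≤ n) (hZ : 0 ≤ Z) (hU0 : 0 ≤ U) (hb : |b| ≤ 1) {x : ℝ}
    (hx : x ≤ 0) :
    (1 - gfun n Z x) * b ≤
      potential n Z (dnpStep U (1 - 1 / n) x b) - (1 - 1 / n) * potential n Z x + Z / 2 := by
  have hn0 : 0 < n := by linarith
  have hρx : (1 - 1 / n) * x ≤ 0 :=
    mul_nonpos_of_nonneg_of_nonpos (sub_nonneg.2 (div_le_one_of_le₀ hn hn0.le)) hx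
  have hy : dnpStep U (1 - 1 / n) x b ≤ 1 ∧ b ≤ dnpStep U (1 - 1 / n) x b - (1 - 1 / n) * x := by
    unfold dnpStep
    split_ifs with h
    · constructor <;> linarith [(abs_le.1 hb).2]
    · have hb0 : b ≤ 0 := by
        by_contra! hb0
        rcases hx.lt_or_eq with hx | hx
        · exact h (Or.inr (Or.inl ⟨hx, hb0⟩))
        · exact h (Or.inl ⟨hx.ge, hx ▸ hU0⟩)
      constructor <;> linarith
  rw [gfun_of_nonpos hZ hx, potential_of_nonpos hn0 hZ hx, sub_zero, one_mul]
  linarith [sub_le_potential_of_le_one hn hZ hy.1]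

lemma potential_step_of_mem_Icc (hn : 1 ≤ n) (hZ : 0 ≤ Z) (hUn : U ≤ n) (hU : gtilde n Z U = 1)
    (hb : |b| ≤ 1) {x : ℝ} (hx : 0 ≤ x) (hxU : x ≤ U) :
    (1 - gfun n Z x) * b ≤
      potential n Z (dnpStep U (1 - 1 / n) x b) - (1 - 1 / n) * potential n Z x + Z / 2 := by
  have hn0 : 0 < n := by linarith
  have hxn : x / n ≤ 1 := div_le_one_of_le₀ (hxU.trans hUn) hn0.le
  have hxn₀ : 0 ≤ x / n := by positivity
  obtain ⟨hb₁, hb₂⟩ := abs_le.1 hb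
  have hmove := mul_one_sub_gfun_le_potential_add_sub hn0 hZ x (b - x / n)
  have hcurv := mul_gfun_add_sub_gtilde_le hn hZ hUn hU hx hxU (c := b - x / n)
    (by linarith) (by linarith)
  have hF := div_le_div_of_nonneg_right (sub_potential_le_half hn0 hZ hU hx hxU) hn0.le
  rw [dnpStep, if_pos (Or.inl ⟨hx, hxU⟩), show (1 - 1 / n) * x + b = x + (b - x / n) by ring,
    gfun_eq_gtilde hn0 hZ hU hx hxU]
  unfold gtildeDeriv at hcurv
  linear_combination hmove + hcurv + hF

lemma potential_step_of_lt (hn : 1 ≤ n) (hZ : 0 ≤ Z) (hU2 : 2 ≤ U) (hUn : U ≤ n)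
    (hU : gtilde n Z U = 1) (hb : |b| ≤ 1) {x : ℝ} (hUx : U < x) :
    (1 - gfun n Z x) * b ≤
      potential n Z (dnpStep U (1 - 1 / n) x b) - (1 - 1 / n) * potential n Z x + Z / 2 := by
  have hn0 : 0 < n := by linarith
  have hU0 : 0 ≤ U := by linarith
  have hUn' : U / n ≤ 1 := div_le_one_of_le₀ hUn hn0.le
  have hρU : (1 - 1 / n) * U ≤ (1 - 1 / n) * x :=
    mul_le_mul_of_nonneg_left hUx.le (sub_nonneg.2 (div_le_one_of_le₀ hn hn0.le))
  have hy : (1 - 1 / n) * U - 1 ≤ dnpStep U (1 - 1 / n) x b := by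
    unfold dnpStep
    split_ifs <;> linarith [(abs_le.1 hb).1]
  have hFU₁ := half_le_potential hn0 hZ hU0 hU
  have hFU := div_le_div_of_nonneg_right hFU₁ hn0.le
  have hFU₀ : 0 ≤ potential n Z U / n := div_nonneg (by linarith) hn0.le
  have hρU' : (1 - 1 / n) * U = U - U / n := by ring
  rw [gfun_of_le hn0 hZ hU0 hU hUx.le, potential_eq_of_le hn0 hZ hU0 hU hUx.le, sub_self, zero_mul,
    show (1 - 1 / n) * potential n Z U = potential n Z U - potential n Z U / n by ring]
  set y := dnpStep U (1 - 1 / n) x b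
  rcases le_total U y with hUy | hyU
  · rw [potential_eq_of_le hn0 hZ hU0 hU hUy]
    linarith
  · -- `y ≥ ρU - 1 ≥ U - 2`; the gain `4 g̃'(U) = Z/2 + U/(2n)` is paid by `F(U)/n ≥ U/(2n)`.
    have hsq : (U - y) ^ 2 ≤ 2 ^ 2 := by gcongr; linarith
    have hgap : potential n Z U - potential n Z y ≤ Z / 2 + U / 2 / n :=
      calc potential n Z U - potential n Z y ≤ gtildeDeriv n Z U * (U - y) ^ 2 :=
            potential_sub_le_sq hn0 hZ hU (by linarith) hyU
        _ ≤ gtildeDeriv n Z U * 2 ^ 2 := by gcongr; exact gtildeDeriv_nonneg hn0 hZ hU0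
        _ = Z / 2 + U / 2 / n := by rw [gtildeDeriv, hU]; ring
    linarith

lemma potential_step (hn : 1 ≤ n) (hZ : 0 ≤ Z) (hU2 : 2 ≤ U) (hUn : U ≤ n)
    (hU : gtilde n Z U = 1) (hb : |b| ≤ 1) (x : ℝ) :
    (1 - gfun n Z x) * b ≤
      potential n Z (dnpStep U (1 - 1 / n) x b) - (1 - 1 / n) * potential n Z x + Z / 2 := by
  rcases le_or_gt x 0 with hx | hx
  · exact potential_step_of_nonpos hn hZ (by linarith) hb hx
  rcases le_or_gt x U with hxU | hUx
  · exact potential_step_of_mem_Icc hn hZ hUn hU hb hx.le hxU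
  · exact potential_step_of_lt hn hZ hU2 hUn hU hb hUx

end step

lemma discounted_sum_Icc_succ {R : Type*} [CommSemiring R] (ρ : R) (f : ℕ → R) (T : ℕ) :
    ∑ t ∈ Finset.Icc 1 (T + 1), ρ ^ (T + 1 - t) * f t =
      ρ * ∑ t ∈ Finset.Icc 1 T, ρ ^ (T - t) * f t + f (T + 1) := by
  rw [Finset.sum_Icc_succ_top (by omega), Nat.sub_self, pow_zero, one_mul, Finset.mul_sum]
  congr 1
  refine Finset.sum_congr rfl fun t ht => ?_
  rw [show T + 1 - t = T - t + 1 by have := (Finset.mem_Icc.1 ht).2; omega, pow_succ]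
  ring

lemma discounted_sum_le_of_step {ρ δ : ℝ} {a Φ : ℕ → ℝ} (hρ₀ : 0 ≤ ρ) (hρ₁ : ρ < 1) (hδ : 0 ≤ δ)
    (hΦ : 0 ≤ Φ 1) (T : ℕ) (hstep : ∀ t ∈ Finset.Icc 1 T, a t ≤ Φ (t + 1) - ρ * Φ t + δ) :
    ∑ t ∈ Finset.Icc 1 T, ρ ^ (T - t) * a t ≤ Φ (T + 1) + δ / (1 - ρ) := by
  have hgeom : ρ * (δ / (1 - ρ)) + δ = δ / (1 - ρ) := by
    field_simp [(sub_pos.2 hρ₁).ne']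
    ring
  induction T with
  | zero =>
    have : 0 ≤ δ / (1 - ρ) := div_nonneg hδ (sub_nonneg.2 hρ₁.le)
    simp only [Finset.Icc_eq_empty_of_lt zero_lt_one, Finset.sum_empty, zero_add]
    linarith
  | succ T ih =>
    have hprev := ih fun t ht => hstep t (Finset.Icc_subset_Icc_right T.le_succ ht)
    have hlast := hstep (T + 1) (Finset.right_mem_Icc.2 (by omega))
    rw [discounted_sum_Icc_succ]
    nlinarith [mul_le_mul_of_nonneg_left hprev hρ₀]

theorem dnp_cu_discounted_payoff_rho_general
    (n Z : ℝ) (hZpos : 0 < Z)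
    (hn : n ≥ max (8 * Real.exp 1) (16 * Real.log (1 / Z)))
    (U : ℝ) (hU0 : 0 ≤ U) (hU1 : gtilde n Z U = 1) (hU22 : 22 ≤ U)
    (T : ℕ) (b : ℕ → ℝ) (hb : ∀ t ∈ Finset.Icc 1 T, |b t| ≤ 1)
    (ρ : ℝ) (hρ : ρ = 1 - 1 / n)
    (x : ℕ → ℝ) (hx1 : x 1 = 0)
    (hxrec : ∀ t, 1 ≤ t → t ≤ T →
      x (t + 1) = if (0 ≤ x t ∧ x t ≤ U) ∨ (x t < 0 ∧ 0 < b t) ∨ (U < x t ∧ b t < 0)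
        then ρ * x t + b t else ρ * x t) :
    ∑ t ∈ Finset.Icc 1 T, ρ ^ (T - t) * gfun n Z (x t) * b t ≥
      ∑ t ∈ Finset.Icc 1 T, ρ ^ (T - t) * b t - Z / (2 * (1 - ρ)) - U - 1 := by
  obtain ⟨he, hlog⟩ := max_le_iff.1 hn
  have hn1 : 1 ≤ n := by linarith [add_one_le_exp 1]
  have hn0 : 0 < n := by linarith
  have hUn : U ≤ n := le_of_gtilde_eq_one hZpos he hlog hU1
  have hρ₀ : 0 ≤ ρ := hρ ▸ sub_nonneg.2 (div_le_one_of_le₀ hn1 hn0.le)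
  have hρ₁ : ρ < 1 := by rw [hρ]; linarith [one_div_pos.2 hn0]
  have hregret := discounted_sum_le_of_step (a := fun t => (1 - gfun n Z (x t)) * b t)
    (Φ := fun t => potential n Z (x t)) hρ₀ hρ₁ (by positivity : 0 ≤ Z / 2)
    (by simp only [hx1, potential_zero, le_refl]) T fun t ht => by
      obtain ⟨ht₁, htT⟩ := Finset.mem_Icc.1 ht
      show _ ≤ potential n Z (x (t + 1)) - _ + _
      rw [hxrec t ht₁ htT, hρ]
      exact potential_step hn1 hZpos.le (by linarith) hUn hU1 (hb t ht) (x t)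
  have hfinal := potential_le hn0 hZpos.le hU0 hU1 (x (T + 1))
  have hsplit : ∑ t ∈ Finset.Icc 1 T, ρ ^ (T - t) * ((1 - gfun n Z (x t)) * b t) =
      ∑ t ∈ Finset.Icc 1 T, ρ ^ (T - t) * b t -
        ∑ t ∈ Finset.Icc 1 T, ρ ^ (T - t) * gfun n Z (x t) * b t := by
    rw [← Finset.sum_sub_distrib]
    exact Finset.sum_congr rfl fun t _ => by ring
  rw [ge_iff_le, ← div_div]
  linarith

/-- discounted payoff lower bound for DNP-cu at its own discount
factor `ρ = 1 - 1/n`, relative to the cumulative discounted bits. -/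
theorem dnp_cu_discounted_payoff_rho
    (n Z : ℝ) (hn1 : 1 ≤ n) (hZpos : 0 < Z) (hZ : Z ≤ 1 / Real.exp 1)
    (hn : n ≥ max (8 * Real.exp 1) (16 * Real.log (1 / Z)))
    (U : ℝ) (hU0 : 0 ≤ U) (hU1 : gtilde n Z U = 1) (hU22 : 22 ≤ U)
    (T : ℕ) (b : ℕ → ℝ) (hb : ∀ t ∈ Finset.Icc 1 T, |b t| ≤ 1)
    (ρ : ℝ) (hρ : ρ = 1 - 1 / n)
    (x : ℕ → ℝ) (hx1 : x 1 = 0)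
    (hxrec : ∀ t, 1 ≤ t → t ≤ T →
      x (t + 1) = if (0 ≤ x t ∧ x t ≤ U) ∨ (x t < 0 ∧ 0 < b t) ∨ (U < x t ∧ b t < 0)
        then ρ * x t + b t else ρ * x t) :
    ∑ t ∈ Finset.Icc 1 T, ρ ^ (T - t) * gfun n Z (x t) * b t ≥
      ∑ t ∈ Finset.Icc 1 T, ρ ^ (T - t) * b t - Z / (2 * (1 - ρ)) - U - 1 :=
  dnp_cu_discounted_payoff_rho_general n Z hZpos hn U hU0 hU1 hU22 T b hb ρ hρ x hx1 hxrec
end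

section
/- Let s_1,…,s_T be reals and 0 < λ_2 < λ_1 < 1. For a discount factor λ ∈ (0,1) define the λ-smoothed average at time j by s_j^λ = (1−λ)·∑_{t=1}^j λ^{j−t}·s_t. Then s_T^{λ_1} = ((1−λ_1)/(1−λ_2))·s_T^{λ_2} + ∑_{j=1}^{T−1} ((1−λ_1)(λ_1−λ_2)·λ_1^{j−1}/(1−λ_2))·s_{T−j}^{λ_2}; moreover, all coefficients in this combination are nonnegative and their sum equals 1 − (λ_1−λ_2)·λ_1^{T−1}/(1−λ_2), which is at most 1. -/
/-!
With `D_λ s j = ∑_{t ≤ j} λ^{j-t} s_t`, so that `s_j^λ = (1 - λ) D_λ s j`, the identity is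
`D_a s T = D_b s T + (a - b) D_a (D_b s) (T - 1)`: both sides satisfy the recursion
`x_{n+1} = a x_n + s_{n+1}`. Reindexing `j ↦ T - j` brings the stated combination into this form, and
the sum of its coefficients is a geometric series.
-/

open Finset

section DiscountedSum

variable {R : Type*} [CommRing R]

def discountedSum (l : R) (s : ℕ → R) (j : ℕ) : R :=
  ∑ t ∈ Icc 1 j, l ^ (j - t) * s t

@[simp]
theorem discountedSum_zero (l : R) (s : ℕ → R) : discountedSum l s 0 = 0 := by
  simp [discountedSum]

theorem discountedSum_succ (l : R) (s : ℕ → R) (j : ℕ) :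
    discountedSum l s (j + 1) = l * discountedSum l s j + s (j + 1) := by
  rw [discountedSum, sum_Icc_succ_top (by omega), discountedSum, mul_sum, Nat.sub_self,
    pow_zero, one_mul]
  congr 1
  refine sum_congr rfl fun t ht => ?_
  rw [Nat.sub_add_comm (mem_Icc.mp ht).2, pow_succ]
  ring

theorem sum_Icc_pow_mul_eq_discountedSum (l : R) (f : ℕ → R) (T : ℕ) :
    ∑ j ∈ Icc 1 (T - 1), l ^ (j - 1) * f (T - j) = discountedSum l f (T - 1) := by
  refine sum_nbij' (T - ·) (T - ·) ?_ ?_ ?_ ?_ fun j hj => ?_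
  any_goals intro j hj; simp only [mem_Icc] at hj ⊢; omega
  rw [show T - 1 - (T - j) = j - 1 by grind]

theorem one_sub_mul_discountedSum_one (l : R) (n : ℕ) :
    (1 - l) * discountedSum l 1 n = 1 - l ^ n := by
  induction n with
  | zero => simp
  | succ n ih => rw [discountedSum_succ, pow_succ, Pi.one_apply]; linear_combination l * ih

theorem discountedSum_eq_add_discountedSum_discountedSum (a b : R) (s : ℕ → R) (T : ℕ) :
    discountedSum a s T =
      discountedSum b s T + (a - b) * discountedSum a (discountedSum b s) (T - 1) := by
  cases T with
  | zero => simp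
  | succ n =>
    induction n with
    | zero => simp [discountedSum_succ]
    | succ n ih =>
      simp only [Nat.add_sub_cancel] at ih ⊢
      rw [discountedSum_succ a s, ih, discountedSum_succ b s (n + 1), discountedSum_succ a _ n]
      ring

end DiscountedSum

theorem smoothed_average_convex_combination_general
    (T : ℕ) (s : ℕ → ℝ)
    (l1 l2 : ℝ) (hl2 : 0 < l2) (hl21 : l2 < l1) (hl1 : l1 < 1)
    (sm : ℝ → ℕ → ℝ)
    (hsm : ∀ l j, sm l j = (1 - l) * ∑ t ∈ Finset.Icc 1 j, l ^ (j - t) * s t) :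
    sm l1 T = (1 - l1) / (1 - l2) * sm l2 T
        + ∑ j ∈ Finset.Icc 1 (T - 1),
            (1 - l1) * (l1 - l2) * l1 ^ (j - 1) / (1 - l2) * sm l2 (T - j) ∧
      0 ≤ (1 - l1) / (1 - l2) ∧
      (∀ j ∈ Finset.Icc 1 (T - 1), 0 ≤ (1 - l1) * (l1 - l2) * l1 ^ (j - 1) / (1 - l2)) ∧
      (1 - l1) / (1 - l2)
          + ∑ j ∈ Finset.Icc 1 (T - 1), (1 - l1) * (l1 - l2) * l1 ^ (j - 1) / (1 - l2)
        = 1 - (l1 - l2) * l1 ^ (T - 1) / (1 - l2) ∧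
      1 - (l1 - l2) * l1 ^ (T - 1) / (1 - l2) ≤ 1 := by
  have hsm' (l : ℝ) (j : ℕ) : sm l j = (1 - l) * discountedSum l s j := hsm l j
  have hl2' : 1 - l2 ≠ 0 := by linarith
  have hl1' : 0 ≤ l1 := by linarith
  have hl12 : 0 ≤ l1 - l2 := by linarith
  have hcoeff (j : ℕ) : 0 ≤ (1 - l1) * (l1 - l2) * l1 ^ (j - 1) / (1 - l2) :=
    div_nonneg (by positivity) (by linarith)
  have hgeom : (1 - l1) * ∑ j ∈ Icc 1 (T - 1), l1 ^ (j - 1) = 1 - l1 ^ (T - 1) := by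
    have := sum_Icc_pow_mul_eq_discountedSum l1 1 T
    simp only [Pi.one_apply, mul_one] at this
    rw [this, one_sub_mul_discountedSum_one]
  refine ⟨?_, div_nonneg (by linarith) (by linarith), fun j _ => hcoeff j, ?_, ?_⟩
  · have hlag : ∑ j ∈ Icc 1 (T - 1),
          (1 - l1) * (l1 - l2) * l1 ^ (j - 1) / (1 - l2) * sm l2 (T - j)
        = (1 - l1) * (l1 - l2) * discountedSum l1 (discountedSum l2 s) (T - 1) := by
      rw [← sum_Icc_pow_mul_eq_discountedSum, mul_sum]
      refine sum_congr rfl fun j _ => ?_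
      rw [hsm']
      field_simp
    rw [hlag, hsm', hsm', discountedSum_eq_add_discountedSum_discountedSum l1 l2]
    field_simp
  · rw [← sum_div, ← mul_sum]
    field_simp
    linear_combination (l1 - l2) * hgeom
  · exact sub_le_self _ (div_nonneg (by positivity) (by linarith))

/-- the `λ₁`-smoothed average at time `T` is a combination of
`λ₂`-smoothed averages at times `j ≤ T`, with nonnegative coefficients summing to
`1 − (λ₁−λ₂)·λ₁^{T−1}/(1−λ₂) ≤ 1`. -/
theorem smoothed_average_convex_combination
    (T : ℕ) (hT : 1 ≤ T) (s : ℕ → ℝ)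
    (l1 l2 : ℝ) (hl2 : 0 < l2) (hl21 : l2 < l1) (hl1 : l1 < 1)
    (sm : ℝ → ℕ → ℝ)
    (hsm : ∀ l j, sm l j = (1 - l) * ∑ t ∈ Finset.Icc 1 j, l ^ (j - t) * s t) :
    sm l1 T = (1 - l1) / (1 - l2) * sm l2 T
        + ∑ j ∈ Finset.Icc 1 (T - 1),
            (1 - l1) * (l1 - l2) * l1 ^ (j - 1) / (1 - l2) * sm l2 (T - j) ∧
      0 ≤ (1 - l1) / (1 - l2) ∧
      (∀ j ∈ Finset.Icc 1 (T - 1), 0 ≤ (1 - l1) * (l1 - l2) * l1 ^ (j - 1) / (1 - l2)) ∧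
      (1 - l1) / (1 - l2)
          + ∑ j ∈ Finset.Icc 1 (T - 1), (1 - l1) * (l1 - l2) * l1 ^ (j - 1) / (1 - l2)
        = 1 - (l1 - l2) * l1 ^ (T - 1) / (1 - l2) ∧
      1 - (l1 - l2) * l1 ^ (T - 1) / (1 - l2) ≤ 1 :=
  smoothed_average_convex_combination_general T s l1 l2 hl2 hl21 hl1 sm hsm
end
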